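/- Let M be sufficient, B a complementary basis, i ∈ B, and suppose B′ = B\{i} ∪ {ī} is also a basis (where ī is the complementary index of i). Then 𝒞(B) ∩ 𝒞(B′) = 𝒞(B\{i}), this is a common facet of both cones, and no other full-dimensional complementary cone intersects the relative interior of 𝒞(B\{i}). -/

import Mathlib

open Matrix

/-- `M` is column sufficient. -/
def ColSuff {n : ℕ} (M : Matrix (Fin n) (Fin n) ℝ) : Prop :=
  ∀ z : Fin n → ℝ, (∀ i, z i * M.mulVec z i ≤ 0) → ∀ i, z i * M.mulVec z i = 0

/-- `M` is sufficient: both `M` and `Mᵀ` are column sufficient. -/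
def Suff {n : ℕ} (M : Matrix (Fin n) (Fin n) ℝ) : Prop := ColSuff M ∧ ColSuff Mᵀ

/-- The matrix `A = [I, -M]`, with columns indexed by `Fin n ⊕ Fin n`. -/
def Amat {n : ℕ} (M : Matrix (Fin n) (Fin n) ℝ) : Matrix (Fin n) (Fin n ⊕ Fin n) ℝ :=
  Matrix.fromCols 1 (-M)

/-- The complementary index. -/
def bar {n : ℕ} : Fin n ⊕ Fin n → Fin n ⊕ Fin n
  | .inl i => .inr i
  | .inr i => .inl i

/-- `B` is a basis of `A = [I, -M]`: `n` linearly independent columns. -/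
def IsBasis {n : ℕ} (M : Matrix (Fin n) (Fin n) ℝ) (B : Finset (Fin n ⊕ Fin n)) : Prop :=
  B.card = n ∧ LinearIndependent ℝ (fun j : B => (Amat M)ᵀ (j : Fin n ⊕ Fin n))

/-- A complementary basis: a basis containing exactly one of each complementary pair. -/
def IsComplBasis {n : ℕ} (M : Matrix (Fin n) (Fin n) ℝ) (B : Finset (Fin n ⊕ Fin n)) : Prop :=
  IsBasis M B ∧ ∀ i : Fin n, Xor' (Sum.inl i ∈ B) (Sum.inr i ∈ B)

/-- The complementary cone `𝒞(J)`: nonnegative combinations of the columns of `A` indexed by `J`. -/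
def coneOf {n : ℕ} (M : Matrix (Fin n) (Fin n) ℝ) (J : Finset (Fin n ⊕ Fin n)) :
    Set (Fin n → ℝ) :=
  {y | ∃ c : Fin n ⊕ Fin n → ℝ, (∀ j, 0 ≤ c j) ∧ (∀ j ∉ J, c j = 0) ∧ y = (Amat M).mulVec c}

/-!
Expressing the column of `bar i` in the basis `B` gives a relation `r` with `A r = 0`,
`r (bar i) = -1`, supported on `B ∪ {bar i}`. Since `B'` is a basis, `r i ≠ 0`, and column
sufficiency forces `r i < 0`: otherwise every complementary product `r j * r (bar j)` would be
`≤ 0`, hence `0`. Two nonnegative representations `c` on `B` and `c'` on `B ∪ {bar i}` of the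
same point satisfy `c = c' + c' (bar i) • r`, so `c i ≤ 0`; this gives the intersection. The
facet is spanned by the `n - 1` independent columns of `B \ {i}`. If a complementary `c''`
represents a point of its relative interior, where the representation `c` on `B \ {i}` is
positive, column sufficiency applied to `c - c''` makes `c` and `c''` cross-complementary, so
`c''` lives on `B ∪ {bar i}`, then `c'' = c`, and `B''` contains `B \ {i}`: only `B` and `B'`
are left.
-/

section

variable {n : ℕ} {M : Matrix (Fin n) (Fin n) ℝ} {B J : Finset (Fin n ⊕ Fin n)}

@[simp] lemma bar_inl (k : Fin n) : bar (.inl k) = .inr k := rfl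

@[simp] lemma bar_inr (k : Fin n) : bar (.inr k) = .inl k := rfl

@[simp] lemma bar_bar (j : Fin n ⊕ Fin n) : bar (bar j) = j := by cases j <;> rfl

@[simp] lemma bar_inj {j k : Fin n ⊕ Fin n} : bar j = bar k ↔ j = k :=
  ⟨fun h => by simpa using congrArg bar h, congrArg bar⟩

lemma bar_ne_self (j : Fin n ⊕ Fin n) : bar j ≠ j := by cases j <;> simp

lemma IsComplBasis.mem_iff_bar_notMem (hB : IsComplBasis M B) (j : Fin n ⊕ Fin n) :
    j ∈ B ↔ bar j ∉ B := by
  rcases j with k | k <;> rcases hB.2 k with h | h <;> simp [h]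

lemma IsComplBasis.bar_notMem (hB : IsComplBasis M B) {j : Fin n ⊕ Fin n} (hj : j ∈ B) :
    bar j ∉ B :=
  (hB.mem_iff_bar_notMem j).1 hj

lemma IsComplBasis.mem_or_bar_mem (hB : IsComplBasis M B) (j : Fin n ⊕ Fin n) :
    j ∈ B ∨ bar j ∈ B :=
  or_iff_not_imp_right.2 (hB.mem_iff_bar_notMem j).2

lemma IsComplBasis.mul_bar_eq_zero (hB : IsComplBasis M B) {c : Fin n ⊕ Fin n → ℝ}
    (hc : ∀ j ∉ B, c j = 0) (j : Fin n ⊕ Fin n) : c j * c (bar j) = 0 := by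
  by_cases hj : j ∈ B
  · rw [hc _ (hB.bar_notMem hj), mul_zero]
  · rw [hc j hj, zero_mul]

lemma IsComplBasis.eq_or_eq_insert_bar_of_erase_subset {B'' : Finset (Fin n ⊕ Fin n)}
    (hB : IsComplBasis M B) (hB'' : IsComplBasis M B'') {i : Fin n ⊕ Fin n} (hi : i ∈ B)
    (h : B.erase i ⊆ B'') : B'' = B ∨ B'' = insert (bar i) (B.erase i) := by
  have hcard : B''.card = B.card := hB''.1.1.trans hB.1.1.symm
  rcases hB''.mem_or_bar_mem i with hi'' | hi''
  · refine Or.inl (Finset.eq_of_subset_of_card_le ?_ hcard.le).symm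
    simpa [hi] using Finset.insert_subset hi'' h
  · refine Or.inr (Finset.eq_of_subset_of_card_le (Finset.insert_subset hi'' h) ?_).symm
    rw [hcard, Finset.card_insert_of_notMem fun h => hB.bar_notMem hi (B.mem_of_mem_erase h),
      Finset.card_erase_add_one hi]

lemma Amat_mulVec (c : Fin n ⊕ Fin n → ℝ) :
    Amat M *ᵥ c = (fun k => c (.inl k)) - M *ᵥ fun k => c (.inr k) := by
  rw [Amat, ← Sum.elim_comp_inl_inr c, fromCols_mulVec_sumElim, one_mulVec, neg_mulVec,
    sub_eq_add_neg]
  rfl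

lemma Amat_mulVec_eq_sum {c : Fin n ⊕ Fin n → ℝ} (hc : ∀ j ∉ J, c j = 0) :
    Amat M *ᵥ c = ∑ j ∈ J, c j • (Amat M)ᵀ j := by
  simp only [mulVec_eq_sum, op_smul_eq_smul]
  exact (Finset.sum_subset J.subset_univ fun j _ hj => by simp [hc j hj]).symm

lemma IsBasis.linearIndepOn (hB : IsBasis M B) : LinearIndepOn ℝ (Amat M)ᵀ (B : Set _) := hB.2

lemma IsBasis.linearIndepOn_erase (hB : IsBasis M B) (i : Fin n ⊕ Fin n) :
    LinearIndepOn ℝ (Amat M)ᵀ (B.erase i : Set _) :=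
  hB.linearIndepOn.mono (Finset.coe_subset.2 (B.erase_subset i))

lemma eq_of_Amat_mulVec_eq (hJ : LinearIndepOn ℝ (Amat M)ᵀ (J : Set _))
    {c c' : Fin n ⊕ Fin n → ℝ} (hc : ∀ j ∉ J, c j = 0) (hc' : ∀ j ∉ J, c' j = 0)
    (h : Amat M *ᵥ c = Amat M *ᵥ c') : c = c' := by
  rw [Amat_mulVec_eq_sum hc, Amat_mulVec_eq_sum hc'] at h
  funext j
  by_cases hj : j ∈ J
  · exact linearIndepOn_finset_iffₛ.1 hJ c c' h j hj
  · rw [hc j hj, hc' j hj]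

lemma IsBasis.exists_Amat_mulVec_eq (hB : IsBasis M B) (y : Fin n → ℝ) :
    ∃ d : Fin n ⊕ Fin n → ℝ, (∀ j ∉ B, d j = 0) ∧ Amat M *ᵥ d = y := by
  have hspan : Submodule.span ℝ (Set.range fun j : B => (Amat M)ᵀ j) = ⊤ :=
    Submodule.eq_top_of_finrank_eq <| by
      rw [finrank_span_eq_card hB.2, Fintype.card_coe, hB.1, Module.finrank_fin_fun]
  obtain ⟨d, hd⟩ :=
    (Submodule.mem_span_range_iff_exists_fun ℝ).1 (hspan ▸ Submodule.mem_top (x := y))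
  refine ⟨fun j => if h : j ∈ B then d ⟨j, h⟩ else 0, fun j hj => dif_neg hj, ?_⟩
  rw [Amat_mulVec_eq_sum fun j hj => dif_neg hj, ← hd, ← B.sum_coe_sort]
  simp

lemma ColSuff.mul_bar_eq_zero (hM : ColSuff M) {c : Fin n ⊕ Fin n → ℝ}
    (hc : Amat M *ᵥ c = 0) (hle : ∀ j, c j * c (bar j) ≤ 0) (j : Fin n ⊕ Fin n) :
    c j * c (bar j) = 0 := by
  have hMc : M *ᵥ (fun k => c (.inr k)) = fun k => c (.inl k) := by
    rw [Amat_mulVec, sub_eq_zero] at hc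
    exact hc.symm
  have key := hM (fun k => c (.inr k)) fun k => by simpa [hMc] using hle (.inr k)
  rcases j with k | k
  · simpa [hMc, mul_comm] using key k
  · simpa [hMc] using key k

lemma ColSuff.mul_bar_eq_zero_of_Amat_mulVec_eq (hM : ColSuff M) {c c' : Fin n ⊕ Fin n → ℝ}
    (hc : ∀ j, 0 ≤ c j) (hc' : ∀ j, 0 ≤ c' j) (hcc : ∀ j, c j * c (bar j) = 0)
    (hcc' : ∀ j, c' j * c' (bar j) = 0) (h : Amat M *ᵥ c = Amat M *ᵥ c')
    (j : Fin n ⊕ Fin n) : c j * c' (bar j) = 0 := by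
  have expand : ∀ j, (c - c') j * (c - c') (bar j) = -(c j * c' (bar j) + c' j * c (bar j)) :=
    fun j => by simp only [Pi.sub_apply]; linear_combination hcc j + hcc' j
  have cross_nonneg : ∀ j, 0 ≤ c j * c' (bar j) + c' j * c (bar j) :=
    fun j => add_nonneg (mul_nonneg (hc j) (hc' _)) (mul_nonneg (hc' j) (hc _))
  have hzero := hM.mul_bar_eq_zero (c := c - c') (by rw [mulVec_sub, h, sub_self])
    (fun j => expand j ▸ neg_nonpos.2 (cross_nonneg j)) j
  rw [expand, neg_eq_zero] at hzero
  exact le_antisymm (by linarith [mul_nonneg (hc' j) (hc (bar j))]) (mul_nonneg (hc j) (hc' _))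

lemma zero_mem_coneOf (M : Matrix (Fin n) (Fin n) ℝ) (J : Finset (Fin n ⊕ Fin n)) :
    (0 : Fin n → ℝ) ∈ coneOf M J :=
  ⟨0, fun _ => le_rfl, fun _ _ => rfl, (mulVec_zero _).symm⟩

lemma col_mem_coneOf {j : Fin n ⊕ Fin n} (hj : j ∈ J) : (Amat M)ᵀ j ∈ coneOf M J :=
  ⟨Pi.single j 1, fun k => by rcases eq_or_ne k j with rfl | hk <;> simp [*],
    fun k hk => Pi.single_eq_of_ne (ne_of_mem_of_not_mem hj hk).symm _,
    (mulVec_single_one _ _).symm⟩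

lemma coneOf_mono {J J' : Finset (Fin n ⊕ Fin n)} (h : J ⊆ J') : coneOf M J ⊆ coneOf M J' :=
  fun _ ⟨c, hc0, hc, hy⟩ => ⟨c, hc0, fun j hj => hc j (mt (@h j) hj), hy⟩

lemma vectorSpan_coneOf (M : Matrix (Fin n) (Fin n) ℝ) (J : Finset (Fin n ⊕ Fin n)) :
    vectorSpan ℝ (coneOf M J) = Submodule.span ℝ (Set.range fun j : J => (Amat M)ᵀ j) := by
  rw [vectorSpan_eq_span_vsub_set_right ℝ (zero_mem_coneOf M J)]
  simp only [vsub_eq_sub, sub_zero, Set.image_id']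
  refine le_antisymm (Submodule.span_le.2 ?_) (Submodule.span_mono ?_)
  · rintro _ ⟨c, -, hc, rfl⟩
    rw [Amat_mulVec_eq_sum hc, ← J.sum_coe_sort]
    exact Submodule.sum_mem _ fun j _ =>
      Submodule.smul_mem _ _ (Submodule.subset_span ⟨j, rfl⟩)
  · rintro _ ⟨j, rfl⟩
    exact col_mem_coneOf j.2

lemma finrank_vectorSpan_coneOf (hJ : LinearIndepOn ℝ (Amat M)ᵀ (J : Set _)) :
    Module.finrank ℝ (vectorSpan ℝ (coneOf M J)) = J.card := by
  rw [vectorSpan_coneOf]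
  exact (finrank_span_eq_card hJ).trans (Fintype.card_coe J)

lemma exists_pos_sub_smul_mem_of_mem_intrinsicInterior {V : Type*} [AddCommGroup V]
    [Module ℝ V] [TopologicalSpace V] [IsTopologicalAddGroup V] [ContinuousSMul ℝ V]
    {s : Set V} {y v : V}
    (hy : y ∈ intrinsicInterior ℝ s) (hv : v ∈ (affineSpan ℝ s).direction) :
    ∃ t : ℝ, 0 < t ∧ y - t • v ∈ s := by
  obtain ⟨x, hx, rfl⟩ := mem_intrinsicInterior.1 hy
  let φ : ℝ → affineSpan ℝ s := fun t => ⟨x - t • v, by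
    simpa [sub_eq_neg_add] using
      AffineSubspace.vadd_mem_of_mem_direction (Submodule.smul_mem _ (-t) hv) x.2⟩
  have hφ : Continuous φ := by fun_prop
  have hnear : ∀ᶠ t in nhds (0 : ℝ), φ t ∈ interior (((↑) : affineSpan ℝ s → V) ⁻¹' s) :=
    hφ.continuousAt.preimage_mem_nhds (by simpa [φ] using isOpen_interior.mem_nhds hx)
  obtain ⟨t, ht, htpos⟩ := ((hnear.filter_mono nhdsWithin_le_nhds).and
    (self_mem_nhdsWithin (s := Set.Ioi 0))).exists
  exact ⟨t, htpos, interior_subset (s := ((↑) : affineSpan ℝ s → V) ⁻¹' s) ht⟩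

lemma pos_of_mem_intrinsicInterior_coneOf (hJ : LinearIndepOn ℝ (Amat M)ᵀ (J : Set _))
    {y : Fin n → ℝ} (hy : y ∈ intrinsicInterior ℝ (coneOf M J)) {c : Fin n ⊕ Fin n → ℝ}
    (hc : ∀ j ∉ J, c j = 0) (hcy : y = Amat M *ᵥ c) {j : Fin n ⊕ Fin n} (hj : j ∈ J) :
    0 < c j := by
  have hdir : (Amat M)ᵀ j ∈ (affineSpan ℝ (coneOf M J)).direction := by
    simpa using AffineSubspace.vsub_mem_direction (mem_affineSpan ℝ (col_mem_coneOf hj))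
      (mem_affineSpan ℝ (zero_mem_coneOf M J))
  obtain ⟨t, ht, c', hc'0, hc', hc'y⟩ :=
    exists_pos_sub_smul_mem_of_mem_intrinsicInterior hy hdir
  have hc'_eq : c - Pi.single j t = c' := by
    refine eq_of_Amat_mulVec_eq hJ (fun k hk => ?_) hc' ?_
    · simp [hc k hk, Pi.single_eq_of_ne (ne_of_mem_of_not_mem hj hk).symm]
    · rw [mulVec_sub, ← hc'y, ← hcy, mulVec_single, op_smul_eq_smul]
      rfl
  have := congrFun hc'_eq j
  simp only [Pi.sub_apply, Pi.single_eq_same] at this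
  linarith [hc'0 j]

variable {i : Fin n ⊕ Fin n}

lemma IsBasis.eq_add_smul_of_Amat_mulVec_eq (hB : IsBasis M B) {k : Fin n ⊕ Fin n} (hk : k ∉ B)
    {r c c' : Fin n ⊕ Fin n → ℝ} (hr : ∀ j ∉ insert k B, r j = 0) (hrk : r k = -1)
    (hAr : Amat M *ᵥ r = 0) (hc : ∀ j ∉ B, c j = 0) (hc' : ∀ j ∉ insert k B, c' j = 0)
    (h : Amat M *ᵥ c = Amat M *ᵥ c') : c = c' + c' k • r := by
  refine eq_of_Amat_mulVec_eq hB.linearIndepOn hc (fun j hj => ?_) ?_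
  · rcases eq_or_ne j k with rfl | hjk
    · simp [hrk]
    · have hj' : j ∉ insert k B := by simp [hjk, hj]
      simp [hc' j hj', hr j hj']
  · rw [mulVec_add, mulVec_smul, hAr, smul_zero, add_zero, h]

lemma ColSuff.exists_exchange_relation (hM : ColSuff M) (hB : IsComplBasis M B) (hi : i ∈ B)
    (hB' : IsBasis M (insert (bar i) (B.erase i))) :
    ∃ r : Fin n ⊕ Fin n → ℝ, (∀ j ∉ insert (bar i) B, r j = 0) ∧ r (bar i) = -1 ∧ r i < 0 ∧
      Amat M *ᵥ r = 0 := by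
  obtain ⟨d, hdB, hd⟩ := hB.1.exists_Amat_mulVec_eq ((Amat M)ᵀ (bar i))
  set r := d - Pi.single (bar i) 1 with hr
  have hr_supp : ∀ j ∉ insert (bar i) B, r j = 0 := by
    intro j hj
    rw [Finset.mem_insert, not_or] at hj
    simp [hr, hdB j hj.2, hj.1]
  have hr_bar : r (bar i) = -1 := by simp [hr, hdB _ (hB.bar_notMem hi)]
  have hAr : Amat M *ᵥ r = 0 := by
    rw [hr, mulVec_sub, hd, mulVec_single_one]
    exact sub_self _
  have hr_i_ne : r i ≠ 0 := by
    intro hri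
    have hr_supp' : ∀ j ∉ insert (bar i) (B.erase i), r j = 0 := by
      intro j hj
      rcases eq_or_ne j i with rfl | hji
      · exact hri
      · exact hr_supp j (by simpa [hji] using hj)
    have hr0 := eq_of_Amat_mulVec_eq hB'.linearIndepOn hr_supp' (c' := 0) (fun _ _ => rfl)
      (by rw [hAr, mulVec_zero])
    simp [hr0] at hr_bar
  refine ⟨r, hr_supp, hr_bar, lt_of_le_of_ne (not_lt.1 fun hpos => hr_i_ne ?_) hr_i_ne, hAr⟩
  -- If `r i > 0`, every complementary product of `r` is `≤ 0`, so column sufficiency applies.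
  have hle : ∀ j, r j * r (bar j) ≤ 0 := by
    intro j
    rcases eq_or_ne j i with rfl | hji
    · rw [hr_bar]; linarith
    rcases eq_or_ne j (bar i) with rfl | hjb
    · rw [bar_bar, hr_bar]; linarith
    rcases hB.mem_or_bar_mem j with hjB | hjB
    · rw [hr_supp (bar j) (by simp [hji, hB.bar_notMem hjB]), mul_zero]
    · rw [hr_supp j (by simp [hjb, (hB.mem_iff_bar_notMem j).not_left.2 hjB]), zero_mul]
  simpa [hr_bar] using hM.mul_bar_eq_zero hAr hle i

theorem coneOf_inter_coneOf_insert_bar_erase (hM : ColSuff M) (hB : IsComplBasis M B)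
    (hi : i ∈ B) (hB' : IsBasis M (insert (bar i) (B.erase i))) :
    coneOf M B ∩ coneOf M (insert (bar i) (B.erase i)) = coneOf M (B.erase i) := by
  obtain ⟨r, hr, hr_bar, hr_i, hAr⟩ := hM.exists_exchange_relation hB hi hB'
  refine subset_antisymm ?_ fun y hy =>
    ⟨coneOf_mono (B.erase_subset i) hy, coneOf_mono (Finset.subset_insert _ _) hy⟩
  rintro y ⟨⟨c, hc0, hc, rfl⟩, ⟨c', hc'0, hc', hcc'⟩⟩
  have hc'B : ∀ j ∉ insert (bar i) B, c' j = 0 := fun j hj =>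
    hc' j (mt (fun h => Finset.insert_subset_insert _ (B.erase_subset i) h) hj)
  have hc'i : c' i = 0 := hc' i (by simp [(bar_ne_self i).symm])
  -- `c i = c' (bar i) * r i ≤ 0`
  have hci := congrFun (hB.1.eq_add_smul_of_Amat_mulVec_eq (hB.bar_notMem hi) hr hr_bar hAr hc
    hc'B hcc') i
  simp only [Pi.add_apply, Pi.smul_apply, smul_eq_mul, hc'i, zero_add] at hci
  refine ⟨c, hc0, fun j hj => ?_, rfl⟩
  rcases eq_or_ne j i with rfl | hji
  · nlinarith [hc0 j, hc'0 (bar j)]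
  · exact hc j (by simpa [hji] using hj)

theorem coneOf_inter_intrinsicInterior_coneOf_erase_eq_empty (hM : ColSuff M)
    (hB : IsComplBasis M B) (hi : i ∈ B) (hB' : IsBasis M (insert (bar i) (B.erase i)))
    {B'' : Finset (Fin n ⊕ Fin n)} (hB'' : IsComplBasis M B'') (hne : B'' ≠ B)
    (hne' : B'' ≠ insert (bar i) (B.erase i)) :
    coneOf M B'' ∩ intrinsicInterior ℝ (coneOf M (B.erase i)) = ∅ := by
  obtain ⟨r, hr, hr_bar, hr_i, hAr⟩ := hM.exists_exchange_relation hB hi hB'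
  refine Set.eq_empty_of_forall_notMem ?_
  rintro y ⟨⟨c'', hc''0, hc'', rfl⟩, hy⟩
  obtain ⟨c, hc0, hc, hcc''⟩ := intrinsicInterior_subset hy
  have hcB : ∀ j ∉ B, c j = 0 := fun j hj => hc j (mt Finset.mem_of_mem_erase hj)
  have hpos : ∀ j ∈ B.erase i, 0 < c j := fun j hj =>
    pos_of_mem_intrinsicInterior_coneOf (hB.1.linearIndepOn_erase i) hy hc hcc'' hj
  have hcross := hM.mul_bar_eq_zero_of_Amat_mulVec_eq hc0 hc''0 (hB.mul_bar_eq_zero hcB)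
    (hB''.mul_bar_eq_zero hc'') hcc''.symm
  have hc''B : ∀ j ∉ insert (bar i) B, c'' j = 0 := by
    intro j hj
    rw [Finset.mem_insert, not_or] at hj
    have hbj : bar j ∈ B.erase i := Finset.mem_erase.2
      ⟨fun h => hj.1 (by rw [← h, bar_bar]), (hB.mem_or_bar_mem j).resolve_left hj.2⟩
    simpa [(hpos _ hbj).ne'] using hcross (bar j)
  have hexch := hB.1.eq_add_smul_of_Amat_mulVec_eq (hB.bar_notMem hi) hr hr_bar hAr hcB hc''B
    hcc''.symm
  -- At `i`: `0 = c'' i + c'' (bar i) * r i` with `r i < 0`, while `c'' i * c'' (bar i) = 0`.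
  have hc''_bar : c'' (bar i) = 0 := by
    have hci := congrFun hexch i
    simp only [Pi.add_apply, Pi.smul_apply, smul_eq_mul, hc i (by simp)] at hci
    rcases mul_eq_zero.1 (hB''.mul_bar_eq_zero hc'' i) with h | h
    · rw [h, zero_add, eq_comm, mul_eq_zero] at hci
      exact hci.resolve_right hr_i.ne
    · exact h
  rw [hc''_bar, zero_smul, add_zero] at hexch
  have hsub : B.erase i ⊆ B'' := fun j hj => by
    by_contra hj''
    exact (hpos j hj).ne' (hexch ▸ hc'' j hj'')
  rcases hB.eq_or_eq_insert_bar_of_erase_subset hB'' hi hsub with h | h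
  exacts [hne h, hne' h]

end

theorem stmt_6 {n : ℕ} (M : Matrix (Fin n) (Fin n) ℝ) (hM : Suff M)
    (B : Finset (Fin n ⊕ Fin n)) (hB : IsComplBasis M B)
    (i : Fin n ⊕ Fin n) (hi : i ∈ B)
    (hB' : IsBasis M (insert (bar i) (B.erase i))) :
    coneOf M B ∩ coneOf M (insert (bar i) (B.erase i)) = coneOf M (B.erase i) ∧
    Module.finrank ℝ (vectorSpan ℝ (coneOf M (B.erase i))) = n - 1 ∧
    ∀ B'' : Finset (Fin n ⊕ Fin n), IsComplBasis M B'' →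
      B'' ≠ B → B'' ≠ insert (bar i) (B.erase i) →
      coneOf M B'' ∩ intrinsicInterior ℝ (coneOf M (B.erase i)) = ∅ := by
  refine ⟨coneOf_inter_coneOf_insert_bar_erase hM.1 hB hi hB', ?_, fun B'' hB'' hne hne' =>
    coneOf_inter_intrinsicInterior_coneOf_erase_eq_empty hM.1 hB hi hB' hB'' hne hne'⟩
  rw [finrank_vectorSpan_coneOf (hB.1.linearIndepOn_erase i), Finset.card_erase_of_mem hi, hB.1.1]
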